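/- Let φ₁, φ₂ ∈ L²(𝕋,H²) be functions such that, for i = 1,2, φ_i(λ) is an inner function for a.e. λ in E_i = {λ ∈ 𝕋 : φ_i(λ) ≠ 0}, and suppose φ₁·L²(𝕋,H²) = φ₂·L²(𝕋,H²). Then E₁ = E₂ =: E up to a null set, and there exists a measurable function ψ : 𝕋 → ℂ with |ψ(λ)| = 1 for a.e. λ ∈ E and ψ(λ) = 0 for a.e. λ ∉ E, such that φ₂(λ) = ψ(λ)·φ₁(λ) for a.e. λ ∈ 𝕋. -/

import Mathlib

noncomputable section

open MeasureTheory Complex Submodule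
open scoped InnerProductSpace ENNReal ComplexConjugate

set_option synthInstance.maxHeartbeats 1000000
set_option maxHeartbeats 1600000

namespace ShiftPaper

instance : Fact ((0:ℝ) < 1) := ⟨one_pos⟩

/-- The circle, modelled as `ℝ/ℤ`. -/
abbrev 𝕋 : Type := UnitAddCircle

/-- The normalized Haar (Lebesgue) probability measure on the circle. -/
abbrev μT : Measure 𝕋 := AddCircle.haarAddCircle

/-- The space `L²(𝕋, E)` of square-integrable `E`-valued functions on the circle. -/
abbrev L2 (E : Type*) [NormedAddCommGroup E] := Lp E 2 μT

lemma norm_fourier (n : ℤ) (t : 𝕋) : ‖fourier n t‖ = 1 := by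
  rw [fourier_apply]
  exact Circle.norm_coe _

section mulF

variable {E : Type*} [NormedAddCommGroup E] [NormedSpace ℂ E]

lemma memLp_mulF (n : ℤ) (f : L2 E) :
    MemLp (fun t => fourier n t • (f : 𝕋 → E) t) 2 μT := by
  refine MemLp.of_le (Lp.memLp f)
    (((fourier n).continuous.aestronglyMeasurable).smul (Lp.aestronglyMeasurable f)) ?_
  refine Filter.Eventually.of_forall fun t => ?_
  rw [norm_smul, norm_fourier, one_mul]

/-- Multiplication by `fourier n` (i.e. by `λ ↦ λⁿ`) as a bounded operator on `L²(𝕋, E)`.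
For `n = 1` this is the bilateral shift `U`; for general `n : ℤ` it is `Uⁿ`. -/
def mulF (n : ℤ) : L2 E →L[ℂ] L2 E :=
  LinearMap.mkContinuous
    { toFun := fun f => (memLp_mulF n f).toLp _
      map_add' := fun f g => by
        rw [← MemLp.toLp_add (memLp_mulF n f) (memLp_mulF n g)]
        refine MemLp.toLp_congr _ _ ?_
        filter_upwards [Lp.coeFn_add f g] with t ht
        simp only [ht, Pi.add_apply, smul_add]
      map_smul' := fun c f => by
        simp only [RingHom.id_apply]
        rw [← MemLp.toLp_const_smul c (memLp_mulF n f)]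
        refine MemLp.toLp_congr _ _ ?_
        filter_upwards [Lp.coeFn_smul c f] with t ht
        rw [ht]
        simp only [Pi.smul_apply]
        rw [smul_comm] }
    1
    (fun f => by
      simp only [LinearMap.coe_mk, AddHom.coe_mk, one_mul]
      rw [Lp.norm_toLp _ (memLp_mulF n f), Lp.norm_def]
      refine le_of_eq (congrArg ENNReal.toReal ?_)
      refine eLpNorm_congr_norm_ae ?_
      refine Filter.Eventually.of_forall fun t => ?_
      rw [norm_smul, norm_fourier, one_mul])

lemma coeFn_mulF (n : ℤ) (f : L2 E) :
    (mulF n f : 𝕋 → E) =ᵐ[μT] fun t => fourier n t • (f : 𝕋 → E) t :=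
  MemLp.coeFn_toLp (memLp_mulF n f)

end mulF

section HardySpace

variable (K : Type) [NormedAddCommGroup K] [InnerProductSpace ℂ K] [CompleteSpace K]

/-- The continuous function `t ↦ fourier n t • x`. -/
def fourierSmulCM (n : ℤ) (x : K) : C(𝕋, K) :=
  ⟨fun t => fourier n t • x, (fourier n).continuous.smul continuous_const⟩

/-- The element of `L²(𝕋, K)` given by `t ↦ fourier n t • x`. -/
def expVec (n : ℤ) (x : K) : L2 K := ContinuousMap.toLp 2 μT ℂ (fourierSmulCM K n x)

lemma coeFn_expVec (n : ℤ) (x : K) :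
    (expVec K n x : 𝕋 → K) =ᵐ[μT] fun t => fourier n t • x :=
  ContinuousMap.coeFn_toLp (𝕜 := ℂ) μT (fourierSmulCM K n x)

/-- The Hardy space `H²(𝕋, K)`, as the subspace of `L²(𝕋, K)` of functions all of whose
weak Fourier coefficients of negative index vanish (equivalently, all of whose coordinate
functions with respect to an orthonormal basis of `K` lie in the scalar Hardy space `H²`). -/
def Hardy : Submodule ℂ (L2 K) :=
  ⨅ (n : ℤ) (_ : n < 0) (x : K), LinearMap.ker (innerSL ℂ (expVec K n x) : L2 K →ₗ[ℂ] ℂ)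

lemma isClosed_Hardy : IsClosed ((Hardy K : Set (L2 K))) := by
  have h : (Hardy K : Set (L2 K)) = ⋂ (n : ℤ) (_ : n < 0) (x : K),
      (LinearMap.ker (innerSL ℂ (expVec K n x) : L2 K →ₗ[ℂ] ℂ) : Set (L2 K)) := by
    simp only [Hardy, Submodule.coe_iInf]
  rw [h]
  exact isClosed_iInter fun n => isClosed_iInter fun _ => isClosed_iInter fun x =>
    (ContinuousLinearMap.isClosed_ker _)

/-- The Hardy space `H²(𝕋, K)` as a Hilbert space in its own right. -/
abbrev H2 := ↥(Hardy K)

instance : CompleteSpace (H2 K) := (isClosed_Hardy K).completeSpace_coe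

end HardySpace


section Shift

variable (K : Type) [NormedAddCommGroup K] [InnerProductSpace ℂ K] [CompleteSpace K]

lemma inner_expVec_mulF (n : ℤ) (x : K) (f : L2 K) :
    inner ℂ (expVec K n x) (mulF 1 f) = inner ℂ (expVec K (n - 1) x) f := by
  rw [MeasureTheory.L2.inner_def, MeasureTheory.L2.inner_def]
  refine integral_congr_ae ?_
  filter_upwards [coeFn_mulF 1 f, coeFn_expVec K n x, coeFn_expVec K (n-1) x] with t h1 h2 h3
  rw [h1, h2, h3, inner_smul_left, inner_smul_left, inner_smul_right,
    ← fourier_neg, ← fourier_neg, ← mul_assoc, ← fourier_add]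
  have h : -n + 1 = -(n - 1) := by ring
  rw [h]

lemma mulF_mem_hardy {f : L2 K} (hf : f ∈ Hardy K) : mulF 1 f ∈ Hardy K := by
  simp only [Hardy, Submodule.mem_iInf, LinearMap.mem_ker,
    ContinuousLinearMap.coe_coe, innerSL_apply_apply] at hf ⊢
  intro n hn x
  rw [inner_expVec_mulF]
  exact hf (n - 1) (by omega) x

/-- The unilateral shift `S` on the Hardy space `H²(𝕋, K)`: the restriction of the
bilateral shift (multiplication by the variable) to the Hardy space. -/
def S : H2 K →L[ℂ] H2 K where
  toLinearMap := (mulF (E := K) 1).toLinearMap.restrict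
    (p := Hardy K) (q := Hardy K) (fun _ hx => mulF_mem_hardy K hx)
  cont := by
    apply Continuous.subtype_mk
    exact (mulF (E := K) 1).continuous.comp continuous_subtype_val

/-- The operator `Ŝ` on `L²(𝕋, H²(𝕋,K))`, acting pointwisely (on the values) as the
unilateral shift `S`. -/
def Shat : L2 (H2 K) →L[ℂ] L2 (H2 K) := (S K).compLpL 2 μT

lemma integral_fourier_eq_zero {m : ℤ} (hm : m ≠ 0) :
    ∫ t : 𝕋, fourier m t ∂μT = 0 := by
  have h0 : ((0:ℤ)) ≠ m := fun h => hm h.symm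
  have h : inner ℂ (fourierLp (T := 1) 2 (0:ℤ)) (fourierLp 2 m) = 0 :=
    orthonormal_fourier.2 h0
  rw [MeasureTheory.L2.inner_def] at h
  rw [← h]
  refine integral_congr_ae ?_
  filter_upwards [coeFn_fourierLp 2 (0:ℤ), coeFn_fourierLp 2 m] with t h1 h2
  rw [h1, h2]
  simp [fourier_zero]

lemma const_mem_hardy (x : K) : expVec K 0 x ∈ Hardy K := by
  simp only [Hardy, Submodule.mem_iInf, LinearMap.mem_ker,
    ContinuousLinearMap.coe_coe, innerSL_apply_apply]
  intro n hn y
  rw [MeasureTheory.L2.inner_def]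
  have h : ∀ᵐ t ∂μT, inner ℂ ((expVec K n y : 𝕋 → K) t) ((expVec K 0 x : 𝕋 → K) t)
      = fourier (-n) t * inner ℂ y x := by
    filter_upwards [coeFn_expVec K n y, coeFn_expVec K 0 x] with t h1 h2
    rw [h1, h2, inner_smul_left, inner_smul_right, ← fourier_neg, fourier_zero, one_mul]
  rw [integral_congr_ae h, integral_mul_const,
    integral_fourier_eq_zero (by omega), zero_mul]

/-- The linear embedding of `K` into `H²(𝕋,K)` as constant functions. -/
def constL : K →ₗ[ℂ] H2 K where
  toFun x := ⟨expVec K 0 x, const_mem_hardy K x⟩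
  map_add' x y := by
    apply Subtype.ext
    simp only [Submodule.coe_add]
    unfold expVec
    rw [← map_add]
    congr 1
    ext t
    simp [fourierSmulCM, smul_add]
  map_smul' c x := by
    apply Subtype.ext
    simp only [RingHom.id_apply, SetLike.val_smul]
    unfold expVec
    rw [← _root_.map_smul]
    congr 1
    ext t
    simp [fourierSmulCM]

end Shift


section RangeFunctions

variable {F : Type*} [NormedAddCommGroup F] [InnerProductSpace ℂ F] [CompleteSpace F]

/-- The orthogonal projection onto a closed subspace, as a plain function (defined to be `0`
if the subspace is not closed). -/
def projTo (N : Submodule ℂ F) (x : F) : F :=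
  letI := Classical.dec (IsClosed ((N : Set F)))
  if h : IsClosed ((N : Set F)) then
    haveI : CompleteSpace N := h.completeSpace_coe
    (orthogonalProjection N x : F)
  else 0

/-- A measurable range function in `F`: a map `J` from `𝕋` to closed subspaces of `F` such
that `t ↦ ⟪P_{J(t)} x, y⟫` is measurable for every `x, y ∈ F`. -/
def IsMeasRange (J : 𝕋 → Submodule ℂ F) : Prop :=
  (∀ t, IsClosed ((J t : Set F))) ∧
  ∀ x y : F, Measurable fun t => inner ℂ (projTo (J t) x) y

/-- The set of `f ∈ L²(𝕋, E)` such that `f(t) ∈ J(t)` for a.e. `t ∈ 𝕋`. -/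
def rangeSet {E : Type*} [NormedAddCommGroup E] [NormedSpace ℂ E]
    (J : 𝕋 → Submodule ℂ E) : Set (L2 E) :=
  {f | ∀ᵐ t ∂μT, (f : 𝕋 → E) t ∈ J t}

end RangeFunctions

section OperatorNotions

variable {E : Type*} [NormedAddCommGroup E] [NormedSpace ℂ E]

/-- A subspace `M` is invariant under the bounded operator `A` if `A(M) ⊆ M`. -/
def InvariantUnder (A : E →L[ℂ] E) (M : Submodule ℂ E) : Prop :=
  ∀ f ∈ M, A f ∈ M

/-- Two bounded operators commute. -/
def CommutesWith (A B : E →L[ℂ] E) : Prop := ∀ f, A (B f) = B (A f)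

variable {F : Type*} [NormedAddCommGroup F] [InnerProductSpace ℂ F]

/-- A subspace `M` is reducing for `A` if both `M` and `M^⊥` are invariant under `A`. -/
def Reducing (A : F →L[ℂ] F) (M : Submodule ℂ F) : Prop :=
  InvariantUnder A M ∧ InvariantUnder A Mᗮ

/-- `Φ` is a partial isometry with initial space `W`: it is isometric on `W` and vanishes
on `W^⊥`. -/
def IsPartialIsometryOn (Φ : F →L[ℂ] F) (W : Submodule ℂ F) : Prop :=
  (∀ f ∈ W, ‖Φ f‖ = ‖f‖) ∧ ∀ f ∈ Wᗮ, Φ f = 0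

end OperatorNotions

section FullHardy

variable (K : Type) [NormedAddCommGroup K] [InnerProductSpace ℂ K] [CompleteSpace K]

/-- For a subspace `N ⊆ K`, the subspace `H²_N` of `H²_K`: those elements of the Hardy space
taking values in `N` almost everywhere. -/
def hardyIn (N : Submodule ℂ K) : Submodule ℂ (H2 K) where
  carrier := {g | ∀ᵐ z ∂μT, ((g : L2 K) : 𝕋 → K) z ∈ N}
  zero_mem' := by
    have h0 : ((0 : H2 K) : L2 K) = 0 := rfl
    rw [Set.mem_setOf_eq, h0]
    filter_upwards [Lp.coeFn_zero K 2 μT] with z hz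
    rw [hz]
    exact N.zero_mem
  add_mem' := by
    intro a b ha hb
    have h0 : ((a + b : H2 K) : L2 K) = (a : L2 K) + (b : L2 K) := rfl
    rw [Set.mem_setOf_eq, h0]
    filter_upwards [ha, hb, Lp.coeFn_add (a : L2 K) (b : L2 K)] with z ha' hb' hadd
    rw [hadd]
    exact N.add_mem ha' hb'
  smul_mem' := by
    intro c a ha
    have h0 : ((c • a : H2 K) : L2 K) = c • (a : L2 K) := rfl
    rw [Set.mem_setOf_eq, h0]
    filter_upwards [ha, Lp.coeFn_smul c (a : L2 K)] with z ha' hsmul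
    rw [hsmul]
    exact N.smul_mem c ha'

/-- The set of `f ∈ L²(𝕋, H²_K)` with `f(t) ∈ H²_{J(t)}` for a.e. `t`. If `J` is a measurable
range function in `K`, this is the full-Hardy subspace with base `J`. -/
def fullHardySet (J : 𝕋 → Submodule ℂ K) : Set (L2 (H2 K)) :=
  {f | ∀ᵐ t ∂μT, (f : 𝕋 → H2 K) t ∈ hardyIn K (J t)}

/-- A subspace `W ⊆ L²(𝕋, H²_K)` is full-Hardy if it is of the form
`{f : f(t) ∈ H²_{J(t)} a.e.}` for some measurable range function `J` in `K`. -/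
def IsFullHardy (W : Submodule ℂ (L2 (H2 K))) : Prop :=
  ∃ J : 𝕋 → Submodule ℂ K, IsMeasRange J ∧ (W : Set (L2 (H2 K))) = fullHardySet K J

end FullHardy

section Dimension

open scoped Classical in
/-- The Hilbert-space dimension of a subspace, as an element of `ℕ∞` (in a separable ambient
space this is the cardinality of any orthonormal basis). -/
def dimSub {F : Type*} [NormedAddCommGroup F] [InnerProductSpace ℂ F]
    (N : Submodule ℂ F) : ℕ∞ :=
  if FiniteDimensional ℂ ↥N then (Module.finrank ℂ ↥N : ℕ∞) else ⊤

end Dimension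

section ScalarCase

/-- Evaluation of an element of the scalar Hardy space (via its chosen representative). -/
def ev (g : H2 ℂ) (z : 𝕋) : ℂ := ((g : L2 ℂ) : 𝕋 → ℂ) z

/-- Iterated evaluation of an element of `L²(𝕋, H²)`. -/
def ev2 (f : L2 (H2 ℂ)) (t z : 𝕋) : ℂ := ev ((f : 𝕋 → H2 ℂ) t) z

/-- A function `h ∈ H²` is inner if `|h(z)| = 1` for a.e. `z ∈ 𝕋`. -/
def IsInnerFn (g : H2 ℂ) : Prop := ∀ᵐ z ∂μT, ‖ev g z‖ = 1

lemma ev_zero : ∀ᵐ z ∂μT, ev (0 : H2 ℂ) z = 0 := by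
  have h0 : ((0 : H2 ℂ) : L2 ℂ) = 0 := rfl
  unfold ev
  rw [h0]
  filter_upwards [Lp.coeFn_zero ℂ 2 μT] with z hz
  rw [hz]
  rfl

lemma ev_add (u v : H2 ℂ) : ∀ᵐ z ∂μT, ev (u + v) z = ev u z + ev v z := by
  have h0 : ((u + v : H2 ℂ) : L2 ℂ) = (u : L2 ℂ) + (v : L2 ℂ) := rfl
  unfold ev
  rw [h0]
  filter_upwards [Lp.coeFn_add (u : L2 ℂ) (v : L2 ℂ)] with z hz
  rw [hz]
  rfl

lemma ev_smul (c : ℂ) (u : H2 ℂ) : ∀ᵐ z ∂μT, ev (c • u) z = c * ev u z := by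
  have h0 : ((c • u : H2 ℂ) : L2 ℂ) = c • (u : L2 ℂ) := rfl
  unfold ev
  rw [h0]
  filter_upwards [Lp.coeFn_smul c (u : L2 ℂ)] with z hz
  rw [hz]
  rfl

/-- For `w ∈ H²`, the subspace `w·H² = {w·k : k ∈ H²}` of `H²` (membership described via
a.e. pointwise multiplication of representatives). -/
def mulSet (w : H2 ℂ) : Submodule ℂ (H2 ℂ) where
  carrier := {u | ∃ k : H2 ℂ, ∀ᵐ z ∂μT, ev u z = ev w z * ev k z}
  zero_mem' := by
    refine ⟨0, ?_⟩
    filter_upwards [ev_zero] with z hz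
    rw [hz, mul_zero]
  add_mem' := by
    rintro u v ⟨k₁, h₁⟩ ⟨k₂, h₂⟩
    refine ⟨k₁ + k₂, ?_⟩
    filter_upwards [h₁, h₂, ev_add u v, ev_add k₁ k₂] with z e1 e2 e3 e4
    rw [e3, e1, e2, e4, mul_add]
  smul_mem' := by
    rintro c u ⟨k, h⟩
    refine ⟨c • k, ?_⟩
    filter_upwards [h, ev_smul c u, ev_smul c k] with z e1 e2 e3
    rw [e2, e1, e3]
    ring

/-- The set `φ·L²(𝕋, H²) = {φ g : g ∈ L²(𝕋,H²)}`, where `(φ g)(t)(z) = φ(t)(z)·g(t)(z)`. -/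
def timesSet (φ : L2 (H2 ℂ)) : Set (L2 (H2 ℂ)) :=
  {h | ∃ g : L2 (H2 ℂ), ∀ᵐ t ∂μT, ∀ᵐ z ∂μT, ev2 h t z = ev2 φ t z * ev2 g t z}

end ScalarCase

section Statements

/-!
Each of `φ₁, φ₂` lies in the multiple set of the other, so fibrewise `φ₁ = φ₂ g` and
`φ₂ = φ₁ k`; in particular `φ₁(t)` and `φ₂(t)` vanish together. Where they do not vanish both
are inner, so `k(t)` is unimodular and `g(t) k(t) = 1`, i.e. `conj k(t) = g(t) ∈ H²`. An `H²`
function whose conjugate is also in `H²` has Fourier coefficients only at `0`, so `k(t)` is a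
unimodular constant, which is read off measurably in `t` as its mean `⟪1, k(t)⟫`.
-/

section FourierCoeff

variable {T : ℝ} [Fact (0 < T)]

lemma fourierCoeff_conj (f : AddCircle T → ℂ) (n : ℤ) :
    fourierCoeff (fun z => conj (f z)) n = conj (fourierCoeff f (-n)) := by
  simp only [fourierCoeff, smul_eq_mul, ← integral_conj, map_mul, ← fourier_neg, neg_neg]

lemma ae_eq_fourierCoeff_zero_of_fourierCoeff_eq_zero
    {f : Lp ℂ 2 (@AddCircle.haarAddCircle T _)} (hf : ∀ n ≠ 0, fourierCoeff f n = 0) :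
    (f : AddCircle T → ℂ) =ᵐ[AddCircle.haarAddCircle] fun _ => fourierCoeff f 0 := by
  set c := fourierCoeff (f : AddCircle T → ℂ) 0
  have hsum : c • fourierLp 2 0 = f :=
    (hasSum_single 0 fun n hn => by rw [hf n hn, zero_smul]).unique
      (hasSum_fourier_series_L2 f)
  filter_upwards [hsum ▸ Lp.coeFn_smul c (fourierLp (T := T) 2 0),
    coeFn_fourierLp (T := T) 2 0] with z h₁ h₂
  rw [h₁, Pi.smul_apply, h₂, fourier_zero, smul_eq_mul, mul_one]

end FourierCoeff

lemma measurableSet_coeFn_ne_zero {α E : Type*} [MeasurableSpace α] [NormedAddCommGroup E]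
    {p : ℝ≥0∞} {μ : Measure α} (f : Lp E p μ) : MeasurableSet {x | (f : α → E) x ≠ 0} :=
  ((Lp.stronglyMeasurable f).measurableSet_eq_fun stronglyMeasurable_const).compl

lemma eq_of_ev_ae_eq {u v : H2 ℂ} (h : ∀ᵐ z ∂μT, ev u z = ev v z) : u = v :=
  Subtype.ext (Lp.ext h)

lemma ev_constL (c : ℂ) : ∀ᵐ z ∂μT, ev (constL ℂ c) z = c := by
  filter_upwards [coeFn_expVec ℂ 0 c] with z hz
  simp [ev, constL, hz]

lemma inner_constL_one_of_ev_ae_eq {u : H2 ℂ} {c : ℂ} (h : ∀ᵐ z ∂μT, ev u z = c) :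
    ⟪constL ℂ 1, u⟫_ℂ = c := by
  rw [Submodule.coe_inner, L2.inner_def, integral_congr_ae (g := fun _ => c)]
  · simp
  · filter_upwards [ev_constL 1, h] with z h₁ h₂
    simp only [ev] at h₁ h₂
    simp [h₁, h₂]

lemma fourierCoeff_ev_eq_zero_of_neg (u : H2 ℂ) {n : ℤ} (hn : n < 0) :
    fourierCoeff (ev u) n = 0 := by
  have h := u.2
  simp only [Hardy, Submodule.mem_iInf, LinearMap.mem_ker, ContinuousLinearMap.coe_coe,
    innerSL_apply_apply, L2.inner_def] at h
  rw [← h n hn 1]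
  refine integral_congr_ae ?_
  filter_upwards [coeFn_expVec ℂ n 1] with z hz
  simp [ev, hz, mul_comm]

lemma ev_ae_eq_const_of_conj_ae_eq {u v : H2 ℂ} (h : ∀ᵐ z ∂μT, ev u z = conj (ev v z)) :
    ∀ᵐ z ∂μT, ev v z = fourierCoeff (ev v) 0 := by
  refine ae_eq_fourierCoeff_zero_of_fourierCoeff_eq_zero fun n hn => ?_
  rcases hn.lt_or_gt with hn | hn
  · exact fourierCoeff_ev_eq_zero_of_neg v hn
  · have hu : fourierCoeff (ev u) (-n) = 0 := fourierCoeff_ev_eq_zero_of_neg u (by omega)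
    rw [fourierCoeff_congr_ae h, fourierCoeff_conj, neg_neg, map_eq_zero] at hu
    exact hu

lemma exists_ev_ae_eq_const_of_mul_eq_one {u v : H2 ℂ} (huv : ∀ᵐ z ∂μT, ev u z * ev v z = 1)
    (hv : ∀ᵐ z ∂μT, ‖ev v z‖ = 1) : ∃ c : ℂ, ‖c‖ = 1 ∧ ∀ᵐ z ∂μT, ev v z = c := by
  have hconj : ∀ᵐ z ∂μT, ev u z = conj (ev v z) := by
    filter_upwards [huv, hv] with z h₁ h₂
    rw [eq_inv_of_mul_eq_one_left h₁, Complex.inv_eq_conj h₂]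
  have hc := ev_ae_eq_const_of_conj_ae_eq hconj
  obtain ⟨z, hz₁, hz₂⟩ := (hv.and hc).exists
  exact ⟨_, hz₂ ▸ hz₁, hc⟩

lemma eq_zero_of_ev_ae_eq_mul {u w g : H2 ℂ} (h : ∀ᵐ z ∂μT, ev u z = ev w z * ev g z)
    (hw : w = 0) : u = 0 := by
  subst hw
  refine eq_of_ev_ae_eq ?_
  filter_upwards [h, ev_zero] with z h₁ h₂
  rw [h₁, h₂, zero_mul]

lemma eq_smul_of_ev_ae_eq_mul_const {u w k : H2 ℂ} {c : ℂ}
    (h : ∀ᵐ z ∂μT, ev u z = ev w z * ev k z) (hk : ∀ᵐ z ∂μT, ev k z = c) : u = c • w := by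
  refine eq_of_ev_ae_eq ?_
  filter_upwards [h, hk, ev_smul c w] with z h₁ h₂ h₃
  rw [h₁, h₂, h₃, mul_comm]

lemma eq_inner_constL_one_smul_of_isInnerFn {u₁ u₂ g k : H2 ℂ} (h₁ : IsInnerFn u₁)
    (h₂ : IsInnerFn u₂) (hg : ∀ᵐ z ∂μT, ev u₁ z = ev u₂ z * ev g z)
    (hk : ∀ᵐ z ∂μT, ev u₂ z = ev u₁ z * ev k z) :
    ‖⟪constL ℂ 1, k⟫_ℂ‖ = 1 ∧ u₂ = ⟪constL ℂ 1, k⟫_ℂ • u₁ := by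
  have hgk : ∀ᵐ z ∂μT, ev g z * ev k z = 1 := by
    filter_upwards [hg, hk, h₁] with z hgz hkz h₁z
    refine mul_left_cancel₀ (norm_ne_zero_iff.mp (h₁z.trans_ne one_ne_zero)) ?_
    linear_combination -hgz - ev g z * hkz
  have hk₁ : ∀ᵐ z ∂μT, ‖ev k z‖ = 1 := by
    filter_upwards [hk, h₁, h₂] with z hkz h₁z h₂z
    simpa [hkz, h₁z] using h₂z
  obtain ⟨c, hc, hkc⟩ := exists_ev_ae_eq_const_of_mul_eq_one hgk hk₁
  rw [inner_constL_one_of_ev_ae_eq hkc]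
  exact ⟨hc, eq_smul_of_ev_ae_eq_mul_const hk hkc⟩

lemma mem_timesSet_self (φ : L2 (H2 ℂ)) : φ ∈ timesSet φ := by
  have hone := memLp_const (μ := μT) (p := 2) (constL ℂ 1)
  refine ⟨hone.toLp _, ?_⟩
  filter_upwards [hone.coeFn_toLp] with t ht
  filter_upwards [ev_constL 1] with z hz
  rw [ev2, ev2, ht, hz, mul_one]

theorem statement18 (φ₁ φ₂ : L2 (H2 ℂ))
    (h₁ : ∀ᵐ t ∂μT, (φ₁ : 𝕋 → H2 ℂ) t ≠ 0 → IsInnerFn ((φ₁ : 𝕋 → H2 ℂ) t))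
    (h₂ : ∀ᵐ t ∂μT, (φ₂ : 𝕋 → H2 ℂ) t ≠ 0 → IsInnerFn ((φ₂ : 𝕋 → H2 ℂ) t))
    (heq : timesSet φ₁ = timesSet φ₂) :
    (∀ᵐ t ∂μT, (φ₁ : 𝕋 → H2 ℂ) t ≠ 0 ↔ (φ₂ : 𝕋 → H2 ℂ) t ≠ 0) ∧
    ∃ ψ : 𝕋 → ℂ, Measurable ψ ∧
      (∀ᵐ t ∂μT, (φ₁ : 𝕋 → H2 ℂ) t ≠ 0 → ‖ψ t‖ = 1) ∧
      (∀ᵐ t ∂μT, (φ₁ : 𝕋 → H2 ℂ) t = 0 → ψ t = 0) ∧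
      (∀ᵐ t ∂μT, (φ₂ : 𝕋 → H2 ℂ) t = ψ t • (φ₁ : 𝕋 → H2 ℂ) t) := by
  obtain ⟨g, hg⟩ : φ₁ ∈ timesSet φ₂ := heq ▸ mem_timesSet_self φ₁
  obtain ⟨k, hk⟩ : φ₂ ∈ timesSet φ₁ := heq ▸ mem_timesSet_self φ₂
  have hzero : ∀ᵐ t ∂μT, (φ₁ : 𝕋 → H2 ℂ) t = 0 ↔ (φ₂ : 𝕋 → H2 ℂ) t = 0 := by
    filter_upwards [hg, hk] with t hgt hkt
    exact ⟨eq_zero_of_ev_ae_eq_mul hkt, eq_zero_of_ev_ae_eq_mul hgt⟩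
  have hfibre : ∀ᵐ t ∂μT, (φ₁ : 𝕋 → H2 ℂ) t ≠ 0 → ‖⟪constL ℂ 1, (k : 𝕋 → H2 ℂ) t⟫_ℂ‖ = 1 ∧
      (φ₂ : 𝕋 → H2 ℂ) t = ⟪constL ℂ 1, (k : 𝕋 → H2 ℂ) t⟫_ℂ • (φ₁ : 𝕋 → H2 ℂ) t := by
    filter_upwards [hg, hk, h₁, h₂, hzero] with t hgt hkt h₁t h₂t hzt ht
    exact eq_inner_constL_one_smul_of_isInnerFn (h₁t ht) (h₂t (hzt.not.mp ht)) hgt hkt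
  refine ⟨hzero.mono fun t => Iff.not, {t | (φ₁ : 𝕋 → H2 ℂ) t ≠ 0}.indicator
    fun t => ⟪constL ℂ 1, (k : 𝕋 → H2 ℂ) t⟫_ℂ, ?_, ?_, ?_, ?_⟩
  · exact ((innerSL ℂ (constL ℂ 1)).continuous.comp_stronglyMeasurable
      (Lp.stronglyMeasurable k)).measurable.indicator (measurableSet_coeFn_ne_zero φ₁)
  · filter_upwards [hfibre] with t ht hne
    simpa [hne] using (ht hne).1
  · exact .of_forall fun t ht => by simp [ht]
  · filter_upwards [hfibre, hzero] with t ht hzt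
    by_cases hne : (φ₁ : 𝕋 → H2 ℂ) t = 0
    · simp [hne, hzt.mp hne]
    · simpa [hne] using (ht hne).2

end Statements

end ShiftPaper
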